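/- Let ⟪−,−⟫ be a B-linear double bracket on A admitting a multiplicative moment map Φ, and set {a,b} := m(⟪a,b⟫). Then {a, Φ_s} = 0 for all a ∈ A and all s ∈ I, hence {a, Φ} = 0 for all a ∈ A. Consequently, for every c = Σ_{s∈I} c_s e_s with all c_s ∈ k∖{0} and every element x of the two-sided ideal (Φ−c) of A generated by Φ−c, one has {a, x} ∈ (Φ−c) for all a ∈ A; thus the induced bracket on H₀(A) = A/[A,A] descends to the quotient A/(Φ−c). -/

import Mathlib

open TensorProduct

noncomputable section

/-- The flip `u ⊗ v ↦ v ⊗ u` on `A ⊗[k] A`. -/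
def flipT (k A : Type*) [CommRing k] [Ring A] [Algebra k A] :
    A ⊗[k] A →ₗ[k] A ⊗[k] A :=
  (TensorProduct.comm k A A).toLinearMap

/-- Outer left multiplication `b · (u ⊗ v) = (b * u) ⊗ v` on `A ⊗[k] A`. -/
def outL (k : Type*) {A : Type*} [CommRing k] [Ring A] [Algebra k A] (b : A) :
    A ⊗[k] A →ₗ[k] A ⊗[k] A :=
  TensorProduct.map (LinearMap.mulLeft k b) LinearMap.id

/-- Outer right multiplication `(u ⊗ v) · c = u ⊗ (v * c)` on `A ⊗[k] A`. -/
def outR (k : Type*) {A : Type*} [CommRing k] [Ring A] [Algebra k A] (c : A) :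
    A ⊗[k] A →ₗ[k] A ⊗[k] A :=
  TensorProduct.map LinearMap.id (LinearMap.mulRight k c)

/-- The cyclic permutation `τ : a₁ ⊗ a₂ ⊗ a₃ ↦ a₃ ⊗ a₁ ⊗ a₂`. -/
def tau3 (k A : Type*) [CommRing k] [Ring A] [Algebra k A] :
    A ⊗[k] (A ⊗[k] A) →ₗ[k] A ⊗[k] (A ⊗[k] A) :=
  (TensorProduct.comm k (A ⊗[k] A) A).toLinearMap ∘ₗ
    (TensorProduct.assoc k A A A).symm.toLinearMap

/-- `D` is a double bracket on `A`: a bilinear map `A × A → A ⊗ A` satisfying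
cyclic antisymmetry and the (outer-bimodule) derivation rule in its second slot. -/
structure IsDoubleBracket {k A : Type*} [CommRing k] [Ring A] [Algebra k A]
    (D : A →ₗ[k] A →ₗ[k] A ⊗[k] A) : Prop where
  cyclic_antisymm : ∀ a b : A, D a b = - flipT k A (D b a)
  derivation : ∀ a b c : A, D a (b * c) = outR k c (D a b) + outL k b (D a c)

/-- The map `d ↦ ⟪a, d′⟫ ⊗ d″` on `A ⊗ A`, valued in `A ⊗ (A ⊗ A)`. -/
def dblExt {k A : Type*} [CommRing k] [Ring A] [Algebra k A]
    (D : A →ₗ[k] A →ₗ[k] A ⊗[k] A) (a : A) :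
    A ⊗[k] A →ₗ[k] A ⊗[k] (A ⊗[k] A) :=
  (TensorProduct.assoc k A A A).toLinearMap ∘ₗ TensorProduct.map (D a) LinearMap.id

/-- The triple bracket associated with a double bracket:
`⟪a,b,c⟫ = ⟪a,⟪b,c⟫′⟫ ⊗ ⟪b,c⟫″ + τ(⟪b,⟪c,a⟫′⟫ ⊗ ⟪c,a⟫″) + τ²(⟪c,⟪a,b⟫′⟫ ⊗ ⟪a,b⟫″)`. -/
def tripleBracket {k A : Type*} [CommRing k] [Ring A] [Algebra k A]
    (D : A →ₗ[k] A →ₗ[k] A ⊗[k] A) (a b c : A) :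
    A ⊗[k] (A ⊗[k] A) :=
  dblExt D a (D b c) + tau3 k A (dblExt D b (D c a))
    + tau3 k A (tau3 k A (dblExt D c (D a b)))

/-- `Φ` is a multiplicative moment map for the double bracket `D` relative to the
orthogonal idempotents `e`: `Φ` is invertible, its off-diagonal components vanish,
and each `Φ_s = e_s Φ e_s` satisfies the multiplicative property
`⟪Φ_s, a⟫ = (1/2)(a e_s ⊗ Φ_s − e_s ⊗ Φ_s a + a Φ_s ⊗ e_s − Φ_s ⊗ e_s a)`. -/
def IsMultMomentMap {k A : Type*} [Field k] [Ring A] [Algebra k A]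
    {I : Type*} (e : I → A) (D : A →ₗ[k] A →ₗ[k] A ⊗[k] A) (Φ : A) : Prop :=
  IsUnit Φ ∧
  (∀ s t : I, s ≠ t → e s * Φ * e t = 0) ∧
  ∀ (s : I) (a : A),
    D (e s * Φ * e s) a = (1/2 : k) •
      ((a * e s) ⊗ₜ[k] (e s * Φ * e s)
        - (e s) ⊗ₜ[k] (e s * Φ * e s * a)
        + (a * (e s * Φ * e s)) ⊗ₜ[k] (e s)
        - (e s * Φ * e s) ⊗ₜ[k] (e s * a))

/-- The multiplication map `A ⊗ A → A`, `u ⊗ v ↦ u v`. -/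
def mulT2 (k A : Type*) [CommRing k] [Ring A] [Algebra k A] :
    A ⊗[k] A →ₗ[k] A :=
  LinearMap.mul' k A

/-- The multiplication map `A ⊗ A ⊗ A → A`, `u ⊗ v ⊗ w ↦ u v w`. -/
def mulT3 (k A : Type*) [CommRing k] [Ring A] [Algebra k A] :
    A ⊗[k] (A ⊗[k] A) →ₗ[k] A :=
  LinearMap.mul' k A ∘ₗ TensorProduct.map LinearMap.id (LinearMap.mul' k A)

/-- `[A,A]`, the k-linear span of commutators in `A`. -/
def commutatorSpan (k A : Type*) [CommRing k] [Ring A] [Algebra k A] :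
    Submodule k A :=
  Submodule.span k {x : A | ∃ a b : A, x = a * b - b * a}

/-- The two-sided ideal of `A` generated by `x` (as a k-submodule: the span of
all elements `p * x * q`). -/
def twoSidedSpan (k : Type*) {A : Type*} [CommRing k] [Ring A] [Algebra k A]
    (x : A) : Submodule k A :=
  Submodule.span k {y : A | ∃ p q : A, y = p * x * q}

/-! By cyclic antisymmetry and the moment map relation, `⟪a, Φ_s⟫` is minus the flip of an
explicit tensor whose four terms cancel in pairs after multiplication, so `{a, Φ_s} = 0`; summing over `s` (the off-diagonal
parts of `Φ` vanish) gives `{a, Φ} = 0`, and B-linearity gives `{a, Φ - c} = 0`. Since `{a, -}`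
is a derivation of `A`, it then maps `p (Φ - c) q` to `{a, p} (Φ - c) q + p (Φ - c) {a, q}`. -/

section

variable {k A : Type*} [CommRing k] [Ring A] [Algebra k A]

theorem mulT2_outR (c : A) (t : A ⊗[k] A) : mulT2 k A (outR k c t) = mulT2 k A t * c := by
  induction t using TensorProduct.induction_on with
  | zero => simp
  | tmul u v => simp [mulT2, outR, mul_assoc]
  | add t₁ t₂ h₁ h₂ => simp only [map_add, h₁, h₂, add_mul]

theorem mulT2_outL (b : A) (t : A ⊗[k] A) : mulT2 k A (outL k b t) = b * mulT2 k A t := by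
  induction t using TensorProduct.induction_on with
  | zero => simp
  | tmul u v => simp [mulT2, outL, mul_assoc]
  | add t₁ t₂ h₁ h₂ => simp only [map_add, h₁, h₂, mul_add]

theorem mulT2_flipT_moment_expr (a f P : A) :
    mulT2 k A (flipT k A ((a * f) ⊗ₜ[k] P - f ⊗ₜ[k] (P * a)
      + (a * P) ⊗ₜ[k] f - P ⊗ₜ[k] (f * a))) = 0 := by
  simp only [flipT, mulT2, map_sub, map_add, LinearEquiv.coe_coe, TensorProduct.comm_tmul,
    LinearMap.mul'_apply]
  noncomm_ring

namespace IsDoubleBracket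

variable {D : A →ₗ[k] A →ₗ[k] A ⊗[k] A}

theorem mulT2_mul (hD : IsDoubleBracket D) (a b c : A) :
    mulT2 k A (D a (b * c)) = mulT2 k A (D a b) * c + b * mulT2 k A (D a c) := by
  rw [hD.derivation, map_add, mulT2_outR, mulT2_outL]

theorem mulT2_mem_twoSidedSpan (hD : IsDoubleBracket D) {a y x : A}
    (hy : mulT2 k A (D a y) = 0) (hx : x ∈ twoSidedSpan k y) :
    mulT2 k A (D a x) ∈ twoSidedSpan k y := by
  induction hx using Submodule.span_induction with
  | mem z hz =>
    obtain ⟨p, q, rfl⟩ := hz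
    have hpyq : mulT2 k A (D a (p * y * q))
        = mulT2 k A (D a p) * y * q + p * y * mulT2 k A (D a q) := by
      rw [hD.mulT2_mul, hD.mulT2_mul, hy]
      noncomm_ring
    rw [hpyq]
    exact Submodule.add_mem _ (Submodule.subset_span ⟨_, _, rfl⟩)
      (Submodule.subset_span ⟨_, _, rfl⟩)
  | zero => simp
  | add u v _ _ hu hv => simpa only [map_add] using Submodule.add_mem _ hu hv
  | smul r u _ hu => simpa only [map_smul] using Submodule.smul_mem _ r hu

end IsDoubleBracket

theorem eq_sum_diag_of_offDiag_eq_zero {I : Type*} [Fintype I] {e : I → A} (he_sum : ∑ s, e s = 1)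
    {x : A} (hoff : ∀ s t, s ≠ t → e s * x * e t = 0) : x = ∑ s, e s * x * e s := by
  calc x = (∑ s, e s) * x * ∑ t, e t := by rw [he_sum, one_mul, mul_one]
    _ = ∑ s, ∑ t, e s * x * e t := by
          simp only [Finset.sum_mul, Finset.mul_sum]
          exact Finset.sum_comm
    _ = ∑ s, e s * x * e s := Finset.sum_congr rfl fun s _ =>
          Finset.sum_eq_single s (fun t _ hts => hoff s t (Ne.symm hts)) (by simp)

end

theorem IsDoubleBracket.mulT2_eq_zero_of_moment {k A : Type*} [Field k] [Ring A] [Algebra k A]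
    {D : A →ₗ[k] A →ₗ[k] A ⊗[k] A} (hD : IsDoubleBracket D) {f P : A}
    (hP : ∀ a, D P a = (1/2 : k) • ((a * f) ⊗ₜ[k] P - f ⊗ₜ[k] (P * a)
      + (a * P) ⊗ₜ[k] f - P ⊗ₜ[k] (f * a))) (a : A) :
    mulT2 k A (D a P) = 0 := by
  rw [hD.cyclic_antisymm, hP, map_smul, map_neg, map_smul, mulT2_flipT_moment_expr,
    smul_zero, neg_zero]

theorem multMomentMap_bracket_descends_general
    {k : Type*} [Field k]
    {A : Type*} [Ring A] [Algebra k A]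
    {I : Type*} [Fintype I]
    (e : I → A)
    (he_sum : ∑ s, e s = 1)
    (D : A →ₗ[k] A →ₗ[k] A ⊗[k] A)
    (hD : IsDoubleBracket D)
    (hDB : ∀ (s : I) (a : A), D (e s) a = 0 ∧ D a (e s) = 0)
    (Φ : A) (hΦ : IsMultMomentMap e D Φ) :
    (∀ (a : A) (s : I), mulT2 k A (D a (e s * Φ * e s)) = 0) ∧
    (∀ a : A, mulT2 k A (D a Φ) = 0) ∧
    ∀ (c : I → k), (∀ s, c s ≠ 0) →
      ∀ (a x : A),
        x ∈ twoSidedSpan k (Φ - ∑ s, c s • e s) →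
        mulT2 k A (D a x) ∈ twoSidedSpan k (Φ - ∑ s, c s • e s) := by
  obtain ⟨-, hoff, hmoment⟩ := hΦ
  have hcomp (a : A) (s : I) : mulT2 k A (D a (e s * Φ * e s)) = 0 :=
    hD.mulT2_eq_zero_of_moment (hmoment s) a
  have hΦ (a : A) : mulT2 k A (D a Φ) = 0 := by
    rw [eq_sum_diag_of_offDiag_eq_zero he_sum hoff, map_sum, map_sum]
    exact Finset.sum_eq_zero fun s _ => hcomp a s
  refine ⟨hcomp, hΦ, fun c _ a x hx => hD.mulT2_mem_twoSidedSpan ?_ hx⟩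
  simp [map_sub, map_sum, hΦ, (hDB _ a).2]

/-- For a B-linear double bracket with multiplicative moment map Φ and
{a,b} := m(⟪a,b⟫): {a, Φ_s} = 0 for all s, hence {a, Φ} = 0; and for any c = Σ c_s e_s
with all c_s ≠ 0, the bracket preserves the two-sided ideal (Φ − c), so the induced
bracket on H₀(A) descends to A/(Φ−c). -/
theorem multMomentMap_bracket_descends
    {k : Type*} [Field k] [CharZero k]
    {A : Type*} [Ring A] [Algebra k A]
    {I : Type*} [Fintype I]
    (e : I → A)
    (he_idem : ∀ s, e s * e s = e s)
    (he_orth : ∀ s t, s ≠ t → e s * e t = 0)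
    (he_sum : ∑ s, e s = 1)
    (he_ne : ∀ s, e s ≠ 0)
    (D : A →ₗ[k] A →ₗ[k] A ⊗[k] A)
    (hD : IsDoubleBracket D)
    (hDB : ∀ (s : I) (a : A), D (e s) a = 0 ∧ D a (e s) = 0)
    (Φ : A) (hΦ : IsMultMomentMap e D Φ) :
    (∀ (a : A) (s : I), mulT2 k A (D a (e s * Φ * e s)) = 0) ∧
    (∀ a : A, mulT2 k A (D a Φ) = 0) ∧
    ∀ (c : I → k), (∀ s, c s ≠ 0) →
      ∀ (a x : A),
        x ∈ twoSidedSpan k (Φ - ∑ s, c s • e s) →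
        mulT2 k A (D a x) ∈ twoSidedSpan k (Φ - ∑ s, c s • e s) :=
  multMomentMap_bracket_descends_general e he_sum D hD hDB Φ hΦ
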